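/- (a) If z ∈ Y then ζ·z = (ζz_1, …, ζz_n) ∈ Y, so z ↦ ζ·z generates a ℤ/(n+1)-action on Y, and this action is free: if ζ^k·z = z for some z ∈ Y then n+1 divides k. (b) The map q : Y → (ℂ∖{0})^n defined by q(z)_i = z_i · (z_1⋯z_n) takes values in the pair of pants 𝒫, is surjective onto 𝒫, and for z, z′ ∈ Y one has q(z) = q(z′) if and only if z′ = ζ^k·z for some integer k. Hence q exhibits 𝒫 as the quotient of Y by the free ℤ/(n+1)-action. -/

import Mathlib

noncomputable section

open Complex

/-- `ζ = exp(2πi/(n+1))`. -/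
def zeta (n : ℕ) : ℂ := Complex.exp (2 * Real.pi * Complex.I / (n + 1))

/-- `Y = {z ∈ (ℂ∖{0})^n : z_1 + ⋯ + z_n + (z_1⋯z_n)⁻¹ = 0}`. -/
def Ycover (n : ℕ) : Set (Fin n → ℂ) :=
  {z | (∀ i, z i ≠ 0) ∧ (∑ i, z i) + (∏ i, z i)⁻¹ = 0}

/-- The `(n−1)`-dimensional pair of pants
`𝒫 = {w ∈ (ℂ∖{0})^n : w_1 + ⋯ + w_n + 1 = 0}`. -/
def pants (n : ℕ) : Set (Fin n → ℂ) :=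
  {w | (∀ i, w i ≠ 0) ∧ (∑ i, w i) + 1 = 0}

/-- The map `q : Y → (ℂ∖{0})^n`, `q(z)_i = z_i · (z_1⋯z_n)`. -/
def qmap (n : ℕ) (z : Fin n → ℂ) : Fin n → ℂ := fun i => z i * ∏ j, z j

/-- (a) `z ↦ ζ·z` generates a free `ℤ/(n+1)`-action on `Y`.
(b) `q` maps `Y` onto the pair of pants `𝒫`, with `q(z) = q(z′)` iff `z′ = ζ^k·z` for
some integer `k`; hence `q` exhibits `𝒫` as the quotient of `Y` by this free action. -/
theorem statement18 (n : ℕ) (hn : 1 ≤ n) :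
    (∀ z ∈ Ycover n, (fun i => zeta n * z i) ∈ Ycover n) ∧
    (∀ z ∈ Ycover n, ∀ k : ℤ, (fun i => zeta n ^ k * z i) = z → ((n : ℤ) + 1) ∣ k) ∧
    (∀ z ∈ Ycover n, qmap n z ∈ pants n) ∧
    (∀ w ∈ pants n, ∃ z ∈ Ycover n, qmap n z = w) ∧
    (∀ z ∈ Ycover n, ∀ z' ∈ Ycover n,
      (qmap n z = qmap n z' ↔ ∃ k : ℤ, z' = fun i => zeta n ^ k * z i)) := by
  have hζ : IsPrimitiveRoot (zeta n) (n+1) := by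
    have := Complex.isPrimitiveRoot_exp (n+1) (Nat.succ_ne_zero n)
    simpa [zeta] using this
  have hζ1 : zeta n ^ (n+1) = 1 := hζ.pow_eq_one
  have hζ0 : zeta n ≠ 0 := Complex.exp_ne_zero _
  refine ⟨?_, ?_, ?_, ?_, ?_⟩
  · -- (a) action
    rintro z ⟨hz0, hzs⟩
    have hP : (∏ i, z i) ≠ 0 := Finset.prod_ne_zero_iff.mpr fun i _ => hz0 i
    refine ⟨fun i => mul_ne_zero hζ0 (hz0 i), ?_⟩
    have hprod : ∏ i, zeta n * z i = zeta n ^ n * ∏ i, z i := by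
      rw [Finset.prod_mul_distrib, Finset.prod_const]
      simp
    have hsum : ∑ i, zeta n * z i = zeta n * ∑ i, z i := by
      rw [Finset.mul_sum]
    rw [hprod, hsum]
    have hS : (∑ i, z i) = -(∏ i, z i)⁻¹ := by linear_combination hzs
    rw [hS]
    have hinv : (zeta n ^ n)⁻¹ = zeta n := by
      refine inv_eq_of_mul_eq_one_right ?_
      rw [← pow_succ]; exact hζ1
    rw [mul_inv, hinv]
    ring
  · -- freeness
    rintro z ⟨hz0, -⟩ k hk
    have i0 : Fin n := ⟨0, hn⟩
    have h1 : zeta n ^ k * z i0 = z i0 := congrFun hk i0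
    have h2 : zeta n ^ k = 1 := by
      field_simp [hz0 i0] at h1; exact h1
    have := (hζ.zpow_eq_one_iff_dvd k).mp h2
    exact_mod_cast this
  · -- q maps to pants
    rintro z ⟨hz0, hzs⟩
    have hP : (∏ i, z i) ≠ 0 := Finset.prod_ne_zero_iff.mpr fun i _ => hz0 i
    refine ⟨fun i => mul_ne_zero (hz0 i) hP, ?_⟩
    have : ∑ i, qmap n z i = (∑ i, z i) * ∏ i, z i := by
      simp [qmap, Finset.sum_mul]
    rw [show (∑ i, qmap n z i) + 1 = (∑ i, z i) * ∏ i, z i + 1 from by rw [this]]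
    have hS : (∑ i, z i) = -(∏ i, z i)⁻¹ := by linear_combination hzs
    rw [hS]
    field_simp
    ring
  · -- surjectivity
    rintro w ⟨hw0, hws⟩
    have hW : (∏ i, w i) ≠ 0 := Finset.prod_ne_zero_iff.mpr fun i _ => hw0 i
    obtain ⟨c, hc⟩ := Complex.isAlgClosed.exists_pow_nat_eq (∏ i, w i) (Nat.succ_pos n)
    have hc0 : c ≠ 0 := by
      intro h; rw [h] at hc; simp at hc; exact hW hc.symm
    refine ⟨fun i => w i / c, ⟨fun i => div_ne_zero (hw0 i) hc0, ?_⟩, ?_⟩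
    · have hprod : ∏ i, w i / c = c := by
        rw [Finset.prod_div_distrib, Finset.prod_const]
        simp only [Finset.card_univ, Fintype.card_fin]
        rw [← hc, pow_succ]
        field_simp
      rw [hprod]
      have hsum : ∑ i, w i / c = (∑ i, w i) / c := by rw [Finset.sum_div]
      rw [hsum]
      have hS : (∑ i, w i) = -1 := by linear_combination hws
      rw [hS]
      field_simp
      ring
    · funext i
      have hprod : ∏ i, w i / c = c := by
        rw [Finset.prod_div_distrib, Finset.prod_const]
        simp only [Finset.card_univ, Fintype.card_fin]
        rw [← hc, pow_succ]
        field_simp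
      simp only [qmap, hprod]
      field_simp
  · -- fibers
    rintro z ⟨hz0, hzs⟩ z' ⟨hz0', hzs'⟩
    have hP : (∏ i, z i) ≠ 0 := Finset.prod_ne_zero_iff.mpr fun i _ => hz0 i
    have hP' : (∏ i, z' i) ≠ 0 := Finset.prod_ne_zero_iff.mpr fun i _ => hz0' i
    constructor
    · intro hq
      have hpt : ∀ i, z i * ∏ j, z j = z' i * ∏ j, z' j := fun i => congrFun hq i
      have hpow : (∏ i, z i) ^ (n+1) = (∏ i, z' i) ^ (n+1) := by
        have : ∏ i, (z i * ∏ j, z j) = ∏ i, (z' i * ∏ j, z' j) :=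
          Finset.prod_congr rfl fun i _ => hpt i
        rw [Finset.prod_mul_distrib, Finset.prod_mul_distrib, Finset.prod_const,
          Finset.prod_const] at this
        simp only [Finset.card_univ, Fintype.card_fin] at this
        calc (∏ i, z i) ^ (n+1) = (∏ i, z i) * (∏ i, z i) ^ n := by ring
        _ = (∏ i, z' i) * (∏ i, z' i) ^ n := this
        _ = (∏ i, z' i) ^ (n+1) := by ring
      have hroot : ((∏ i, z' i) / (∏ i, z i)) ^ (n+1) = 1 := by
        rw [div_pow, hpow, div_self (pow_ne_zero _ hP')]
      obtain ⟨k, -, hk⟩ := hζ.eq_pow_of_pow_eq_one hroot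
      refine ⟨-(k : ℤ), ?_⟩
      have hPP : (∏ i, z' i) = zeta n ^ k * ∏ i, z i := by
        field_simp at hk; linear_combination -hk
      funext i
      have h1 := hpt i
      rw [hPP] at h1
      have hk0 : zeta n ^ k ≠ 0 := pow_ne_zero _ hζ0
      rw [zpow_neg, zpow_natCast]
      have : z' i * zeta n ^ k * ∏ j, z j = z i * ∏ j, z j := by linear_combination -h1
      have h2 : z' i * zeta n ^ k = z i := mul_right_cancel₀ hP this
      field_simp
      linear_combination h2
    · rintro ⟨k, rfl⟩
      funext i
      have hprod : ∏ j, zeta n ^ k * z j = (zeta n ^ k) ^ n * ∏ j, z j := by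
        rw [Finset.prod_mul_distrib, Finset.prod_const]
        simp
      simp only [qmap, hprod]
      have hone : zeta n ^ k * (zeta n ^ k) ^ n = 1 := by
        rw [← zpow_natCast (zeta n ^ k) n, ← zpow_mul, ← zpow_add₀ hζ0]
        have : (k + k * n : ℤ) = (n+1 : ℕ) * k := by push_cast; ring
        rw [this, zpow_mul, zpow_natCast, hζ1, one_zpow]
      calc z i * ∏ j, z j
          = (zeta n ^ k * (zeta n ^ k) ^ n) * (z i * ∏ j, z j) := by rw [hone, one_mul]
        _ = zeta n ^ k * z i * ((zeta n ^ k) ^ n * ∏ j, z j) := by ring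

end
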